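/- arXiv:1601.00321 — 3 statements merged into one kernel-verified Lean document; each statement's English description precedes it below -/
import Mathlib

section
/- Let A, B be real constants with 0 < B < A, let K be an integer with K ≥ 2, let γ ∈ (0,1), and let f(ρ) = A·ρ^{1−γ} + B·[((1−K)ρ + K)^{1−γ} − ρ^{1−γ}]. Then f is strictly concave on the interval (0,1]. -/
open Real Set

/-!
Regrouping, `f ρ = (A - B) ρ ^ (1 - γ) + B ((1 - K) ρ + K) ^ (1 - γ)`. The first term is strictly
concave since `A - B > 0`, and the second is concave because `(1 - K) ρ + K` runs along the
segment from `K` to `1`, where `x ↦ x ^ (1 - γ)` is concave.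
-/

section

variable {𝕜 E β : Type*}

theorem StrictConcaveOn.smul [CommSemiring 𝕜] [PartialOrder 𝕜] [AddCommMonoid E]
    [AddCommMonoid β] [PartialOrder β] [SMul 𝕜 E] [Module 𝕜 β] [PosSMulStrictMono 𝕜 β]
    {s : Set E} {f : E → β} {c : 𝕜} (hc : 0 < c) (hf : StrictConcaveOn 𝕜 s f) :
    StrictConcaveOn 𝕜 s fun x => c • f x :=
  ⟨hf.1, fun x hx y hy hxy a b ha hb hab =>
    calc
      a • c • f x + b • c • f y = c • (a • f x + b • f y) := by
        rw [smul_add, smul_comm c, smul_comm c]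
      _ < c • f (a • x + b • y) := smul_lt_smul_of_pos_left (hf.2 hx hy hxy ha hb hab) hc⟩

theorem ConcaveOn.comp_lineMap [Field 𝕜] [LinearOrder 𝕜] [IsStrictOrderedRing 𝕜]
    [AddCommGroup E] [Module 𝕜 E] [AddCommMonoid β] [PartialOrder β] [SMul 𝕜 β]
    {s : Set E} {f : E → β} (hf : ConcaveOn 𝕜 s f) {a b : E} (ha : a ∈ s) (hb : b ∈ s) :
    ConcaveOn 𝕜 (Icc (0 : 𝕜) 1) (f ∘ AffineMap.lineMap a b) :=
  (hf.comp_affineMap (AffineMap.lineMap a b)).subset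
    (fun _ ht => hf.1.segment_subset ha hb (lineMap_mem_segment 𝕜 a b ht)) (convex_Icc 0 1)

end

/-- For `0 < B < A`, an integer `K ≥ 2`, `γ ∈ (0,1)`, the function
`f(ρ) = A·ρ^{1−γ} + B·[((1−K)ρ + K)^{1−γ} − ρ^{1−γ}]` is strictly concave on `(0,1]`. -/
theorem stmt_1 (A B γ : ℝ) (K : ℤ) (hB : 0 < B) (hBA : B < A) (hK : 2 ≤ K)
    (hγ0 : 0 < γ) (hγ1 : γ < 1) :
    StrictConcaveOn ℝ (Set.Ioc (0 : ℝ) 1)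
      (fun ρ : ℝ => A * ρ ^ (1 - γ) +
        B * (((1 - (K : ℝ)) * ρ + (K : ℝ)) ^ (1 - γ) - ρ ^ (1 - γ))) := by
  have hp₀ : 0 < 1 - γ := by linarith
  have hp₁ : 1 - γ < 1 := by linarith
  have hK₀ : (0 : ℝ) ≤ K := by exact_mod_cast (by omega : (0 : ℤ) ≤ K)
  have hpow : StrictConcaveOn ℝ (Ioc 0 1) fun ρ : ℝ => (A - B) • ρ ^ (1 - γ) :=
    ((strictConcaveOn_rpow hp₀ hp₁).subset (Ioc_subset_Ioi_self.trans Ioi_subset_Ici_self)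
      (convex_Ioc 0 1)).smul (sub_pos.2 hBA)
  have hsegment : ConcaveOn ℝ (Ioc 0 1)
      fun ρ : ℝ => B • (AffineMap.lineMap (K : ℝ) 1 ρ) ^ (1 - γ) :=
    (((concaveOn_rpow hp₀.le hp₁.le).comp_lineMap hK₀ (zero_le_one (α := ℝ))).subset
      Ioc_subset_Icc_self (convex_Ioc 0 1)).smul hB.le
  refine (hpow.add_concaveOn hsegment).congr fun ρ _ => ?_
  simp only [Pi.add_apply, AffineMap.lineMap_apply_module, smul_eq_mul]
  ring_nf
end

section
/- Let A, B be real constants with 0 < B < A, let K be an integer with K ≥ 2, let γ ∈ (0,1), and let f(ρ) = A·ρ^{1−γ} + B·[((1−K)ρ + K)^{1−γ} − ρ^{1−γ}]. If A ≥ K·B, then f is monotone nondecreasing on (0,1]; in particular, f(ρ) ≤ f(1) for every ρ ∈ (0,1], so the optimal MPC cache fraction is ρ* = 1. -/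
open Real Set

lemma le_one_sub_mul_add {k x : ℝ} (hk : 0 ≤ k) (hx : x ≤ 1) : x ≤ (1 - k) * x + k := by
  nlinarith

section

variable {a b k p : ℝ}

lemma hasDerivAt_mul_rpow_add_mul_affine_rpow {x : ℝ} (hx : 0 < x)
    (hu : 0 < (1 - k) * x + k) :
    HasDerivAt (fun y => a * y ^ p + b * ((1 - k) * y + k) ^ p)
      (p * (a * x ^ (p - 1) - b * (k - 1) * ((1 - k) * x + k) ^ (p - 1))) x := by
  have hpow := (hasDerivAt_rpow_const (p := p) (Or.inl hx.ne')).const_mul a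
  have haff := (((hasDerivAt_id' x).const_mul (1 - k)).add_const k).rpow_const
    (p := p) (Or.inl hu.ne')
  exact (hpow.add (haff.const_mul b)).congr_deriv (by ring)

/-- The derivative `p (a x^{p-1} - b (k-1) u^{p-1})` is nonnegative since `x ≤ u = (1-k)x + k`
and `p - 1 ≤ 0` give `u^{p-1} ≤ x^{p-1}`. -/
lemma monotoneOn_mul_rpow_add_mul_affine_rpow (hp0 : 0 ≤ p) (hp1 : p ≤ 1) (hk : 1 ≤ k)
    (hb : 0 ≤ b) (hab : b * (k - 1) ≤ a) :
    MonotoneOn (fun x => a * x ^ p + b * ((1 - k) * x + k) ^ p) (Ioc 0 1) := by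
  have hle : ∀ x ∈ Ioc (0 : ℝ) 1, x ≤ (1 - k) * x + k := fun x hx =>
    le_one_sub_mul_add (by linarith) hx.2
  have hderiv : ∀ x ∈ Ioc (0 : ℝ) 1, HasDerivAt _ _ x := fun x hx =>
    hasDerivAt_mul_rpow_add_mul_affine_rpow (a := a) (b := b) (p := p) hx.1
      (hx.1.trans_le (hle x hx))
  refine monotoneOn_of_hasDerivWithinAt_nonneg (convex_Ioc 0 1)
    (fun x hx => (hderiv x hx).continuousAt.continuousWithinAt)
    (fun x hx => (hderiv x (interior_subset hx)).hasDerivWithinAt) fun x hx => ?_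
  have hxs : x ∈ Ioc (0 : ℝ) 1 := interior_subset hx
  have hx0 := hxs.1
  have hu := hle x hxs
  have hrpow : ((1 - k) * x + k) ^ (p - 1) ≤ x ^ (p - 1) :=
    rpow_le_rpow_of_nonpos hx0 hu (by linarith)
  have hcoef : 0 ≤ b * (k - 1) := mul_nonneg hb (by linarith)
  refine mul_nonneg hp0 (sub_nonneg.2 ?_)
  calc b * (k - 1) * ((1 - k) * x + k) ^ (p - 1)
      ≤ b * (k - 1) * x ^ (p - 1) := mul_le_mul_of_nonneg_left hrpow hcoef
    _ ≤ a * x ^ (p - 1) := mul_le_mul_of_nonneg_right hab (rpow_nonneg hx0.le _)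

end

theorem stmt_3_general (A B γ : ℝ) (K : ℤ) (hB : 0 < B) (hK : 2 ≤ K)
    (hγ0 : 0 < γ) (hγ1 : γ < 1) (hKB : (K : ℝ) * B ≤ A) :
    MonotoneOn
      (fun ρ : ℝ => A * ρ ^ (1 - γ) +
        B * (((1 - (K : ℝ)) * ρ + (K : ℝ)) ^ (1 - γ) - ρ ^ (1 - γ)))
      (Set.Ioc (0 : ℝ) 1) ∧
    ∀ ρ ∈ Set.Ioc (0 : ℝ) 1,
      (A * ρ ^ (1 - γ) +
        B * (((1 - (K : ℝ)) * ρ + (K : ℝ)) ^ (1 - γ) - ρ ^ (1 - γ))) ≤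
      (A * (1 : ℝ) ^ (1 - γ) +
        B * (((1 - (K : ℝ)) * 1 + (K : ℝ)) ^ (1 - γ) - (1 : ℝ) ^ (1 - γ))) := by
  refine (fun hf => ⟨hf, fun ρ hρ => hf hρ (right_mem_Ioc.2 zero_lt_one) hρ.2⟩) ?_
  have hK1 : (1 : ℝ) ≤ K := by exact_mod_cast (by omega : (1 : ℤ) ≤ K)
  -- `f ρ = (A - B) ρ^{1-γ} + B ((1-K)ρ + K)^{1-γ}`, and `A ≥ K B` is `A - B ≥ B (K - 1)`.
  exact (monotoneOn_mul_rpow_add_mul_affine_rpow (a := A - B) (b := B) (p := 1 - γ) (by linarith)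
    (by linarith) hK1 hB.le (by linarith)).congr fun ρ _ => by ring

/-- For `0 < B < A`, an integer `K ≥ 2`, `γ ∈ (0,1)`, and
`f(ρ) = A·ρ^{1−γ} + B·[((1−K)ρ + K)^{1−γ} − ρ^{1−γ}]`: if `A ≥ K·B` then `f` is
monotone nondecreasing on `(0,1]`, and in particular `f(ρ) ≤ f(1)` for every
`ρ ∈ (0,1]` (the optimal MPC cache fraction is `ρ* = 1`). -/
theorem stmt_3 (A B γ : ℝ) (K : ℤ) (hB : 0 < B) (hBA : B < A) (hK : 2 ≤ K)
    (hγ0 : 0 < γ) (hγ1 : γ < 1) (hKB : (K : ℝ) * B ≤ A) :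
    MonotoneOn
      (fun ρ : ℝ => A * ρ ^ (1 - γ) +
        B * (((1 - (K : ℝ)) * ρ + (K : ℝ)) ^ (1 - γ) - ρ ^ (1 - γ)))
      (Set.Ioc (0 : ℝ) 1) ∧
    ∀ ρ ∈ Set.Ioc (0 : ℝ) 1,
      (A * ρ ^ (1 - γ) +
        B * (((1 - (K : ℝ)) * ρ + (K : ℝ)) ^ (1 - γ) - ρ ^ (1 - γ))) ≤
      (A * (1 : ℝ) ^ (1 - γ) +
        B * (((1 - (K : ℝ)) * 1 + (K : ℝ)) ^ (1 - γ) - (1 : ℝ) ^ (1 - γ))) :=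
  stmt_3_general A B γ K hB hK hγ0 hγ1 hKB
end

section
/- Let A, B be real constants with 0 < B < A, let K be an integer with K ≥ 2, let γ ∈ (0,1), and let f(ρ) = A·ρ^{1−γ} + B·[((1−K)ρ + K)^{1−γ} − ρ^{1−γ}]. If moreover A < K·B, then the point ρ* = K / [ ((K−1)/(A/B − 1))^{1/γ} + K − 1 ] lies in the open interval (0,1), satisfies f'(ρ*) = 0 where f'(ρ) = (1−γ)(A−B)·ρ^{−γ} − (1−γ)·B·(K−1)·((1−K)ρ + K)^{−γ}, and maximizes f on (0,1]: f(ρ) ≤ f(ρ*) for every ρ ∈ (0,1]. -/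
/-!
Rewriting `f(ρ) = (A - B) ρ^{1-γ} + B ((1 - K) ρ + K)^{1-γ}` exhibits `f` as a nonnegative
combination of concave functions (a concave power, and a concave power of an affine map), so
`f` is concave on `[0, 1]` and any critical point in that interval is a global maximum there.
The equation `f'(ρ) = 0` says that `((1 - K) ρ + K) / ρ` equals
`c = ((K - 1) / (A / B - 1))^{1/γ}`, i.e. `ρ = K / (c + K - 1)`; the condition `B < A < K B`
makes `c > 1`, which puts this point inside `(0, 1)`.
-/

open Real Set

theorem ConcaveOn.isMaxOn_of_hasDerivAt_eq_zero {S : Set ℝ} {f : ℝ → ℝ} {x : ℝ}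
    (hf : ConcaveOn ℝ S f) (hx : x ∈ S) (hfx : HasDerivAt f 0 x) : IsMaxOn f S x := by
  refine isMaxOn_iff.2 fun y hy ↦ ?_
  rcases lt_trichotomy x y with hxy | rfl | hyx
  · have := hf.slope_le_of_hasDerivAt hx hy hxy hfx
    rw [slope_def_field, div_le_iff₀ (sub_pos.2 hxy)] at this
    linarith
  · exact le_rfl
  · have := hf.le_slope_of_hasDerivAt hy hx hyx hfx
    rw [slope_def_field, le_div_iff₀ (sub_pos.2 hyx)] at this
    linarith

theorem concaveOn_rpow_affine (a b : ℝ) {p : ℝ} (hp₀ : 0 ≤ p) (hp₁ : p ≤ 1) :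
    ConcaveOn ℝ {x | 0 ≤ a * x + b} fun x ↦ (a * x + b) ^ p := by
  have hg : ∀ x, AffineMap.lineMap b (a + b) x = a * x + b := fun x ↦ by
    rw [AffineMap.lineMap_apply_ring']; ring
  simpa only [Set.preimage, mem_Ici, Function.comp_def, hg] using
    (Real.concaveOn_rpow hp₀ hp₁).comp_affineMap (AffineMap.lineMap b (a + b))

noncomputable section

def cacheServiceProb (A B K γ ρ : ℝ) : ℝ :=
  A * ρ ^ (1 - γ) + B * (((1 - K) * ρ + K) ^ (1 - γ) - ρ ^ (1 - γ))

def cacheServiceProbDeriv (A B K γ ρ : ℝ) : ℝ :=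
  (1 - γ) * (A - B) * ρ ^ (-γ) - (1 - γ) * B * (K - 1) * ((1 - K) * ρ + K) ^ (-γ)

def optimalRatio (A B K γ : ℝ) : ℝ :=
  ((K - 1) / (A / B - 1)) ^ (1 / γ)

def optimalFraction (A B K γ : ℝ) : ℝ :=
  K / (optimalRatio A B K γ + K - 1)

end

variable {A B K γ : ℝ}

theorem concaveOn_cacheServiceProb (hB : 0 ≤ B) (hBA : B ≤ A) (hK : 0 ≤ K)
    (hγ₀ : 0 ≤ γ) (hγ₁ : γ ≤ 1) :
    ConcaveOn ℝ (Icc 0 1) (cacheServiceProb A B K γ) := by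
  have hpow := (Real.concaveOn_rpow (p := 1 - γ) (by linarith) (by linarith)).subset
    Icc_subset_Ici_self (convex_Icc 0 1)
  have haff := (concaveOn_rpow_affine (1 - K) K (p := 1 - γ) (by linarith) (by linarith)).subset
    (fun x hx ↦ show 0 ≤ (1 - K) * x + K by nlinarith [hx.1, hx.2]) (convex_Icc 0 1)
  have hf : cacheServiceProb A B K γ =
      (A - B) • (fun x ↦ x ^ (1 - γ)) + B • fun x ↦ ((1 - K) * x + K) ^ (1 - γ) := by
    ext ρ
    simp only [cacheServiceProb, Pi.add_apply, Pi.smul_apply, smul_eq_mul]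
    ring
  exact hf ▸ (hpow.smul (sub_nonneg.2 hBA)).add (haff.smul hB)

theorem hasDerivAt_cacheServiceProb {ρ : ℝ} (hρ : ρ ≠ 0) (hq : (1 - K) * ρ + K ≠ 0) :
    HasDerivAt (cacheServiceProb A B K γ) (cacheServiceProbDeriv A B K γ ρ) ρ := by
  have hpow : HasDerivAt (fun x : ℝ ↦ x ^ (1 - γ)) ((1 - γ) * ρ ^ (-γ)) ρ := by
    simpa using Real.hasDerivAt_rpow_const (p := 1 - γ) (Or.inl hρ)
  have haff : HasDerivAt (fun x : ℝ ↦ ((1 - K) * x + K) ^ (1 - γ))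
      ((1 - K) * (1 - γ) * ((1 - K) * ρ + K) ^ (-γ)) ρ := by
    simpa using (((hasDerivAt_id ρ).const_mul (1 - K)).add_const K).rpow_const
      (p := 1 - γ) (Or.inl hq)
  refine ((hpow.const_mul A).add ((haff.sub hpow).const_mul B)).congr_deriv ?_
  rw [cacheServiceProbDeriv]
  ring

theorem one_lt_optimalRatio_base (hB : 0 < B) (hBA : B < A) (hAK : A < K * B) :
    1 < (K - 1) / (A / B - 1) := by
  have h1 : 1 < A / B := (one_lt_div hB).2 hBA
  have h2 : A / B < K := (div_lt_iff₀ hB).2 hAK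
  rw [one_lt_div (by linarith)]
  linarith

theorem one_lt_optimalRatio (hB : 0 < B) (hBA : B < A) (hAK : A < K * B) (hγ : 0 < γ) :
    1 < optimalRatio A B K γ :=
  one_lt_rpow (one_lt_optimalRatio_base hB hBA hAK) (by positivity)

theorem mul_optimalRatio_rpow_neg (hB : 0 < B) (hBA : B < A) (hAK : A < K * B) (hγ : 0 < γ) :
    B * (K - 1) * optimalRatio A B K γ ^ (-γ) = A - B := by
  have ht := one_lt_optimalRatio_base hB hBA hAK
  have hK : K - 1 ≠ 0 := by nlinarith
  rw [optimalRatio, ← Real.rpow_mul (by linarith), one_div_mul_eq_div, neg_div, div_self hγ.ne',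
    Real.rpow_neg_one, inv_div]
  field_simp

theorem optimalRatio_mul_optimalFraction (hB : 0 < B) (hBA : B < A) (hAK : A < K * B)
    (hγ : 0 < γ) :
    optimalRatio A B K γ * optimalFraction A B K γ = (1 - K) * optimalFraction A B K γ + K := by
  have hc := one_lt_optimalRatio hB hBA hAK hγ
  have hK : 1 < K := by nlinarith
  have hden : optimalRatio A B K γ + K - 1 ≠ 0 := by linarith
  rw [optimalFraction]
  field_simp
  ring

theorem optimalFraction_mem_Ioo (hB : 0 < B) (hBA : B < A) (hAK : A < K * B) (hγ : 0 < γ) :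
    optimalFraction A B K γ ∈ Ioo 0 1 := by
  have hc := one_lt_optimalRatio hB hBA hAK hγ
  have hK : 1 < K := by nlinarith
  rw [optimalFraction]
  exact ⟨div_pos (by linarith) (by linarith), (div_lt_one (by linarith)).2 (by linarith)⟩

theorem cacheServiceProbDeriv_optimalFraction (hB : 0 < B) (hBA : B < A) (hAK : A < K * B)
    (hγ : 0 < γ) : cacheServiceProbDeriv A B K γ (optimalFraction A B K γ) = 0 := by
  have hc := one_lt_optimalRatio hB hBA hAK hγ
  have hρ := optimalFraction_mem_Ioo hB hBA hAK hγ
  rw [cacheServiceProbDeriv, ← optimalRatio_mul_optimalFraction hB hBA hAK hγ,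
    Real.mul_rpow (by linarith) hρ.1.le]
  linear_combination -(1 - γ) * optimalFraction A B K γ ^ (-γ) *
    mul_optimalRatio_rpow_neg hB hBA hAK hγ

theorem stmt_4_general (A B γ : ℝ) (K : ℤ) (hB : 0 < B) (hBA : B < A)
    (hγ0 : 0 < γ) (hγ1 : γ < 1) (hKB : A < (K : ℝ) * B) :
    (K : ℝ) / ((((K : ℝ) - 1) / (A / B - 1)) ^ (1 / γ) + (K : ℝ) - 1) ∈
      Set.Ioo (0 : ℝ) 1 ∧
    ((1 - γ) * (A - B) *
        ((K : ℝ) / ((((K : ℝ) - 1) / (A / B - 1)) ^ (1 / γ) + (K : ℝ) - 1)) ^ (-γ) -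
      (1 - γ) * B * ((K : ℝ) - 1) *
        ((1 - (K : ℝ)) *
            ((K : ℝ) / ((((K : ℝ) - 1) / (A / B - 1)) ^ (1 / γ) + (K : ℝ) - 1)) +
          (K : ℝ)) ^ (-γ)) = 0 ∧
    ∀ ρ ∈ Set.Ioc (0 : ℝ) 1,
      (A * ρ ^ (1 - γ) +
        B * (((1 - (K : ℝ)) * ρ + (K : ℝ)) ^ (1 - γ) - ρ ^ (1 - γ))) ≤
      (A * ((K : ℝ) / ((((K : ℝ) - 1) / (A / B - 1)) ^ (1 / γ) + (K : ℝ) - 1)) ^ (1 - γ) +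
        B * (((1 - (K : ℝ)) *
              ((K : ℝ) / ((((K : ℝ) - 1) / (A / B - 1)) ^ (1 / γ) + (K : ℝ) - 1)) +
            (K : ℝ)) ^ (1 - γ) -
          ((K : ℝ) / ((((K : ℝ) - 1) / (A / B - 1)) ^ (1 / γ) + (K : ℝ) - 1)) ^ (1 - γ))) := by
  have hK : (1 : ℝ) < K := by nlinarith
  have hρ := optimalFraction_mem_Ioo hB hBA hKB hγ0
  have hcrit := cacheServiceProbDeriv_optimalFraction hB hBA hKB hγ0
  have hq : (1 - (K : ℝ)) * optimalFraction A B K γ + K ≠ 0 := by nlinarith [hρ.2]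
  have hderiv := hasDerivAt_cacheServiceProb (A := A) (B := B) (γ := γ) hρ.1.ne' hq
  rw [hcrit] at hderiv
  have hmax := ((concaveOn_cacheServiceProb hB.le hBA.le (by linarith) hγ0.le hγ1.le).subset
    Ioc_subset_Icc_self (convex_Ioc 0 1)).isMaxOn_of_hasDerivAt_eq_zero ⟨hρ.1, hρ.2.le⟩ hderiv
  exact ⟨hρ, hcrit, fun ρ hρ' ↦ hmax hρ'⟩

/-- For `0 < B < A`, an integer `K ≥ 2`, `γ ∈ (0,1)`, and
`f(ρ) = A·ρ^{1−γ} + B·[((1−K)ρ + K)^{1−γ} − ρ^{1−γ}]`: if `A < K·B`, then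
`ρ* = K / [((K−1)/(A/B − 1))^{1/γ} + K − 1]` lies in `(0,1)`, satisfies `f'(ρ*) = 0`
where `f'(ρ) = (1−γ)(A−B)·ρ^{−γ} − (1−γ)·B·(K−1)·((1−K)ρ + K)^{−γ}`, and maximizes
`f` on `(0,1]`. -/
theorem stmt_4 (A B γ : ℝ) (K : ℤ) (hB : 0 < B) (hBA : B < A) (hK : 2 ≤ K)
    (hγ0 : 0 < γ) (hγ1 : γ < 1) (hKB : A < (K : ℝ) * B) :
    (K : ℝ) / ((((K : ℝ) - 1) / (A / B - 1)) ^ (1 / γ) + (K : ℝ) - 1) ∈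
      Set.Ioo (0 : ℝ) 1 ∧
    ((1 - γ) * (A - B) *
        ((K : ℝ) / ((((K : ℝ) - 1) / (A / B - 1)) ^ (1 / γ) + (K : ℝ) - 1)) ^ (-γ) -
      (1 - γ) * B * ((K : ℝ) - 1) *
        ((1 - (K : ℝ)) *
            ((K : ℝ) / ((((K : ℝ) - 1) / (A / B - 1)) ^ (1 / γ) + (K : ℝ) - 1)) +
          (K : ℝ)) ^ (-γ)) = 0 ∧
    ∀ ρ ∈ Set.Ioc (0 : ℝ) 1,
      (A * ρ ^ (1 - γ) +
        B * (((1 - (K : ℝ)) * ρ + (K : ℝ)) ^ (1 - γ) - ρ ^ (1 - γ))) ≤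
      (A * ((K : ℝ) / ((((K : ℝ) - 1) / (A / B - 1)) ^ (1 / γ) + (K : ℝ) - 1)) ^ (1 - γ) +
        B * (((1 - (K : ℝ)) *
              ((K : ℝ) / ((((K : ℝ) - 1) / (A / B - 1)) ^ (1 / γ) + (K : ℝ) - 1)) +
            (K : ℝ)) ^ (1 - γ) -
          ((K : ℝ) / ((((K : ℝ) - 1) / (A / B - 1)) ^ (1 / γ) + (K : ℝ) - 1)) ^ (1 - γ))) :=
  stmt_4_general A B γ K hB hBA hγ0 hγ1 hKB
end
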